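/- arXiv:1309.7934 — 5 statements merged into one kernel-verified Lean document; each statement's English description precedes it below -/
import Mathlib

section
/- For every n ≥ 0, the words H^n(01) and H^n(10) both have length F_{n+2}, and they agree on their first F_{n+2}−2 symbols while their last two symbols are 01 and 10 in some order (i.e., they differ exactly in the last two positions, which are swapped). -/
/-- Fibonacci substitution on finite words: H(0)=01, H(1)=0 (0 ↦ `false`, 1 ↦ `true`). -/
def Hword : List Bool → List Bool
  | [] => []
  | false :: t => false :: true :: Hword t
  | true :: t => false :: Hword t

/-- Paper-indexed Fibonacci numbers, shifted by 2: `fibP k = F_{k-2}`, so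
`fibP 0 = F_{-2} = 1`, `fibP 1 = F_{-1} = 0`, `fibP 2 = F_0 = 1`, `fibP 3 = F_1 = 1`, … -/
def fibP : ℕ → ℕ
  | 0 => 1
  | 1 => 0
  | n + 2 => fibP (n + 1) + fibP n

/-- Fibonacci substitution on infinite binary sequences. -/
def Hseq (x : ℕ → Bool) : ℕ → Bool :=
  fun n => (Hword ((List.range (n + 1)).map x)).getD n false

/-- The left shift on infinite binary sequences. -/
def shift (x : ℕ → Bool) : ℕ → Bool := fun n => x (n + 1)

/-!
`H` is a monoid morphism of `List Bool`, so everything reduces to the images of single letters.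
Since `H [a, !a] = [false] ++ [!a, a]` for both values of `a`, one application of `H` to
`w ++ [a, !a]` and `w ++ [!a, a]` yields words that again share a prefix and end in swapped pairs;
iterating from `01` and `10` gives the claim. The lengths follow from `H^(n+2) 0 = H^(n+1) 0 ++ H^n 0`.
-/

theorem Hword_append (u v : List Bool) : Hword (u ++ v) = Hword u ++ Hword v := by
  induction u with
  | nil => rfl
  | cons b t ih => cases b <;> simp [Hword, ih]

theorem Hword_iterate_append (n : ℕ) (u v : List Bool) :
    Hword^[n] (u ++ v) = Hword^[n] u ++ Hword^[n] v := by
  induction n generalizing u v with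
  | zero => rfl
  | succ n ih => rw [Function.iterate_succ_apply, Hword_append, ih, ← Function.iterate_succ_apply,
      ← Function.iterate_succ_apply]

theorem Hword_iterate_succ_false (n : ℕ) :
    Hword^[n + 1] [false] = Hword^[n] [false] ++ Hword^[n] [true] :=
  Hword_iterate_append n [false] [true]

theorem Hword_iterate_succ_true (n : ℕ) : Hword^[n + 1] [true] = Hword^[n] [false] := rfl

theorem length_Hword_iterate_false : ∀ n : ℕ, (Hword^[n] [false]).length = fibP (n + 3)
  | 0 => rfl
  | 1 => rfl
  | n + 2 => by
    rw [Hword_iterate_succ_false, List.length_append, length_Hword_iterate_false (n + 1),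
      Hword_iterate_succ_true, length_Hword_iterate_false n]
    rfl

theorem Hword_append_pair (w : List Bool) (a : Bool) :
    Hword (w ++ [a, !a]) = (Hword w ++ [false]) ++ [!a, a] := by
  cases a <;> simp [Hword_append, Hword]

theorem Hword_iterate_swap (n : ℕ) : ∃ (w : List Bool) (a : Bool),
    Hword^[n] [false, true] = w ++ [a, !a] ∧ Hword^[n] [true, false] = w ++ [!a, a] := by
  induction n with
  | zero => exact ⟨[], false, rfl, rfl⟩
  | succ n ih =>
    obtain ⟨w, a, h01, h10⟩ := ih
    refine ⟨Hword w ++ [false], !a, ?_, ?_⟩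
    · rw [Function.iterate_succ_apply', h01, Hword_append_pair, Bool.not_not]
    · rw [Function.iterate_succ_apply', h10]
      simpa using Hword_append_pair w (!a)

/-- `H^n(01)` and `H^n(10)` have length `F_{n+2} = fibP (n+4)`, agree on the
first `F_{n+2} - 2` symbols and their last two symbols are `01` and `10` in some order. -/
theorem Hn_01_10 (n : ℕ) :
    (Hword^[n] [false, true]).length = fibP (n + 4) ∧
    (Hword^[n] [true, false]).length = fibP (n + 4) ∧
    (Hword^[n] [false, true]).take (fibP (n + 4) - 2)
      = (Hword^[n] [true, false]).take (fibP (n + 4) - 2) ∧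
    ∃ a : Bool,
      (Hword^[n] [false, true]).drop (fibP (n + 4) - 2) = [a, !a] ∧
      (Hword^[n] [true, false]).drop (fibP (n + 4) - 2) = [!a, a] := by
  obtain ⟨w, a, h01, h10⟩ := Hword_iterate_swap n
  -- `[false, true]` is `H [false]`
  have hlen : (Hword^[n] [false, true]).length = fibP (n + 4) :=
    length_Hword_iterate_false (n + 1)
  have hw : w.length = fibP (n + 4) - 2 := by
    rw [h01, List.length_append] at hlen
    simp only [List.length_cons, List.length_nil] at hlen
    omega
  refine ⟨hlen, ?_, ?_, a, ?_, ?_⟩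
  · rw [← hlen, h01, h10]
    simp
  · rw [h01, h10, ← hw, List.take_left, List.take_left]
  · rw [h01, ← hw, List.drop_left]
  · rw [h10, ← hw, List.drop_left]
end

section
/- For the golden mean rotation T_γ(x) = x + 1/γ (mod 1) with γ = (1+√5)/2, coding points of the circle by 0 if they lie in the arc [0, 1/γ) and by 1 if they lie in [1/γ, 1), the itinerary of the point 2/γ (mod 1) equals the fixed point ρ of the Fibonacci substitution. -/
theorem length_Hword_singleton (b : Bool) : (Hword [b]).length = if b then 1 else 2 := by
  cases b <;> rfl

theorem Hseq_zero (x : ℕ → Bool) : Hseq x 0 = false := by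
  change (Hword [x 0]).getD 0 false = false
  cases x 0 <;> rfl

section Blocks

variable (x : ℕ → Bool)

def blockStart (k : ℕ) : ℕ := (Hword ((List.range k).map x)).length

theorem blockStart_zero : blockStart x 0 = 0 := rfl

theorem blockStart_succ (k : ℕ) :
    blockStart x (k + 1) = blockStart x k + (Hword [x k]).length := by
  simp only [blockStart, List.range_succ, List.map_append, List.map_cons, List.map_nil,
    Hword_append, List.length_append]

theorem strictMono_blockStart : StrictMono (blockStart x) :=
  strictMono_nat_of_lt_succ fun k => by
    rw [blockStart_succ, length_Hword_singleton]
    split <;> omega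

theorem lt_blockStart_of_head_eq_false (h0 : x 0 = false) {n : ℕ} (hn : 0 < n) :
    n < blockStart x n := by
  have h1 : blockStart x 1 = 2 := by
    rw [blockStart_succ, blockStart_zero, length_Hword_singleton, h0]; rfl
  have := (strictMono_blockStart x).add_le_nat (n - 1) 1
  rw [h1, Nat.sub_add_cancel hn] at this
  omega

theorem Hseq_apply_of_lt_blockStart {n k : ℕ} (hk : k ≤ n + 1) (hn : n < blockStart x k) :
    Hseq x n = (Hword ((List.range k).map x)).getD n false := by
  rw [Hseq, ← Nat.add_sub_cancel' hk, List.range_add, List.map_append, Hword_append,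
    List.getD_append _ _ _ _ hn]

theorem Hseq_blockStart_add {k i : ℕ} (hi : i < (Hword [x k]).length) :
    Hseq x (blockStart x k + i) = (Hword [x k]).getD i false := by
  have hk : k + 1 ≤ blockStart x k + i + 1 := by
    have := (strictMono_blockStart x).le_apply (x := k); omega
  have hlt : blockStart x k + i < blockStart x (k + 1) := by rw [blockStart_succ]; omega
  rw [Hseq_apply_of_lt_blockStart x hk hlt, List.range_succ, List.map_append, Hword_append,
    List.getD_append_right _ _ _ (blockStart x k + i) (Nat.le_add_right _ _)]
  simp [blockStart]

theorem exists_eq_blockStart_add (n : ℕ) :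
    ∃ k i, i < (Hword [x k]).length ∧ n = blockStart x k + i := by
  induction n with
  | zero => exact ⟨0, 0, by rw [length_Hword_singleton]; split <;> omega, rfl⟩
  | succ n ih =>
    obtain ⟨k, i, hi, rfl⟩ := ih
    by_cases hlast : i + 1 < (Hword [x k]).length
    · exact ⟨k, i + 1, hlast, rfl⟩
    · refine ⟨k + 1, 0, by rw [length_Hword_singleton]; split <;> omega, ?_⟩
      rw [blockStart_succ]; omega

theorem Hseq_eq_self_of_blocks (h0 : ∀ k, x (blockStart x k) = false)
    (h1 : ∀ k, x k = false → x (blockStart x k + 1) = true) : Hseq x = x := by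
  funext n
  obtain ⟨k, i, hi, rfl⟩ := exists_eq_blockStart_add x n
  rw [Hseq_blockStart_add x hi]
  rw [length_Hword_singleton] at hi
  cases hxk : x k <;> rw [hxk] at hi <;> simp only [Bool.false_eq_true, if_false, if_true] at hi
  · interval_cases i
    · exact (h0 k).symm
    · exact (h1 k hxk).symm
  · interval_cases i
    exact (h0 k).symm

end Blocks

theorem Hseq_fixedPoint_unique {x y : ℕ → Bool} (hx : Hseq x = x) (hy : Hseq y = y) :
    x = y := by
  funext n
  induction n using Nat.strong_induction_on with
  | _ n ih =>
  rcases Nat.eq_zero_or_pos n with rfl | hn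
  · rw [← hx, ← hy, Hseq_zero, Hseq_zero]
  have hprefix : (List.range n).map x = (List.range n).map y :=
    List.map_congr_left fun m hm => ih m (List.mem_range.mp hm)
  have hx0 : x 0 = false := hx ▸ Hseq_zero x
  have hy0 : y 0 = false := hy ▸ Hseq_zero y
  calc x n = Hseq x n := (congrFun hx n).symm
    _ = (Hword ((List.range n).map x)).getD n false :=
      Hseq_apply_of_lt_blockStart x n.le_succ (lt_blockStart_of_head_eq_false x hx0 hn)
    _ = (Hword ((List.range n).map y)).getD n false := by rw [hprefix]
    _ = Hseq y n :=
      (Hseq_apply_of_lt_blockStart y n.le_succ (lt_blockStart_of_head_eq_false y hy0 hn)).symm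
    _ = y n := congrFun hy n

section FractAdd

variable {R : Type*} [CommRing R] [LinearOrder R] [IsStrictOrderedRing R] [FloorRing R] {x y : R}

theorem Int.fract_add_of_fract_add_lt (hy : 0 ≤ y) (h : Int.fract x + y < 1) :
    Int.fract (x + y) = Int.fract x + y :=
  Int.fract_eq_iff.mpr ⟨add_nonneg (Int.fract_nonneg x) hy, h, ⌊x⌋, by
    rw [← Int.self_sub_fract x]; abel⟩

theorem Int.fract_add_of_one_le_fract_add (hy : y < 1) (h : 1 ≤ Int.fract x + y) :
    Int.fract (x + y) = Int.fract x + y - 1 :=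
  Int.fract_eq_iff.mpr ⟨by linarith, by linarith [Int.fract_lt_one x], ⌊x⌋ + 1, by
    push_cast; rw [← Int.self_sub_fract x]; abel⟩

end FractAdd

section Rotation

variable {β : ℝ}

noncomputable def rotationCoding (β : ℝ) (n : ℕ) : Bool :=
  decide (β ≤ Int.fract ((n + 2) * β))

theorem rotationCoding_eq_false_iff (n : ℕ) :
    rotationCoding β n = false ↔ Int.fract ((n + 2) * β) < β := by
  simp [rotationCoding]

theorem rotationCoding_eq_true_iff (hβ₀ : 0 ≤ β) (hβ₁ : β < 1) (n : ℕ) :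
    rotationCoding β n = true ↔ Int.fract ((n + 1) * β) + β < 1 := by
  have hsplit : ((n : ℝ) + 2) * β = (n + 1) * β + β := by ring
  rw [rotationCoding, decide_eq_true_iff, hsplit]
  constructor
  · intro h
    by_contra! hle
    rw [Int.fract_add_of_one_le_fract_add hβ₁ hle] at h
    linarith [Int.fract_lt_one (((n : ℝ) + 1) * β)]
  · intro h
    rw [Int.fract_add_of_fract_add_lt hβ₀ h]
    linarith [Int.fract_nonneg (((n : ℝ) + 1) * β)]

theorem blockStart_rotationCoding (hβ₀ : 0 ≤ β) (hβ₁ : β < 1) (k : ℕ) :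
    (blockStart (rotationCoding β) k : ℝ) = k + (k + 1) * β - Int.fract ((k + 1) * β) := by
  induction k with
  | zero =>
    rw [blockStart_zero, Int.fract_eq_self.mpr (by simpa using ⟨hβ₀, hβ₁⟩)]
    simp
  | succ k ih =>
    have hsplit : ((k + 1 : ℕ) + 1 : ℝ) * β = (k + 1) * β + β := by push_cast; ring
    rw [blockStart_succ, length_Hword_singleton, hsplit]
    split
    case isTrue h =>
      rw [Int.fract_add_of_fract_add_lt hβ₀ ((rotationCoding_eq_true_iff hβ₀ hβ₁ k).mp h)]
      push_cast; linarith
    case isFalse h =>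
      have hle : 1 ≤ Int.fract ((k + 1) * β) + β :=
        not_lt.mp (mt (rotationCoding_eq_true_iff hβ₀ hβ₁ k).mpr h)
      rw [Int.fract_add_of_one_le_fract_add hβ₁ hle]
      push_cast; linarith

end Rotation

namespace Real

open goldenRatio

theorem inv_goldenRatio_sq : φ⁻¹ ^ 2 = 1 - φ⁻¹ := by
  rw [inv_goldenRatio]; linear_combination goldenConj_sq

theorem goldenRatio_sub_inv : φ - φ⁻¹ = 1 := by
  rw [inv_goldenRatio]; linear_combination goldenRatio_add_goldenConj

theorem inv_goldenRatio_pos : 0 < φ⁻¹ := inv_pos.mpr goldenRatio_pos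

theorem inv_goldenRatio_lt_one : φ⁻¹ < 1 := inv_lt_one_of_one_lt₀ one_lt_goldenRatio

theorem fract_natCast_mul_inv_goldenRatio_pos {n : ℕ} (hn : n ≠ 0) :
    0 < Int.fract (n * φ⁻¹) :=
  Int.fract_pos.mpr ((goldenRatio_irrational.inv.natCast_mul hn).ne_int _)

end Real

section GoldenRatio

open Real goldenRatio

theorem blockStart_add_two_mul_inv_goldenRatio (k : ℕ) :
    ((blockStart (rotationCoding φ⁻¹) k : ℝ) + 2) * φ⁻¹
      = (k + 1 : ℕ) + φ⁻¹ * (1 - Int.fract ((k + 1) * φ⁻¹)) := by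
  rw [blockStart_rotationCoding inv_goldenRatio_pos.le inv_goldenRatio_lt_one]
  push_cast
  linear_combination (k + 1 : ℝ) * inv_goldenRatio_sq

theorem rotationCoding_blockStart (k : ℕ) :
    rotationCoding φ⁻¹ (blockStart (rotationCoding φ⁻¹) k) = false := by
  have hf : 0 < Int.fract ((k + 1) * φ⁻¹) := by
    exact_mod_cast fract_natCast_mul_inv_goldenRatio_pos k.succ_ne_zero
  have hf₁ : Int.fract ((k + 1) * φ⁻¹) < 1 := Int.fract_lt_one _
  rw [rotationCoding_eq_false_iff, blockStart_add_two_mul_inv_goldenRatio, Int.fract_natCast_add,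
    Int.fract_eq_self.mpr ⟨by nlinarith [inv_goldenRatio_pos],
      by nlinarith [inv_goldenRatio_lt_one, inv_goldenRatio_pos]⟩]
  nlinarith [inv_goldenRatio_pos]

theorem rotationCoding_blockStart_add_one {k : ℕ} (h : rotationCoding φ⁻¹ k = false) :
    rotationCoding φ⁻¹ (blockStart (rotationCoding φ⁻¹) k + 1) = true := by
  set f := Int.fract ((k + 1) * φ⁻¹)
  have hf : f < 1 := Int.fract_lt_one _
  have hle : 1 ≤ f + φ⁻¹ := not_lt.mp fun hlt => by
    rw [(rotationCoding_eq_true_iff inv_goldenRatio_pos.le inv_goldenRatio_lt_one k).mpr hlt] at h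
    exact Bool.noConfusion h
  have hlt : 1 < f + φ⁻¹ := by
    have hpos : 0 < Int.fract ((k + 1) * φ⁻¹ + φ⁻¹) := by
      have := fract_natCast_mul_inv_goldenRatio_pos (k + 1).succ_ne_zero
      push_cast at this
      rwa [show ((k : ℝ) + 1 + 1) * φ⁻¹ = (k + 1) * φ⁻¹ + φ⁻¹ by ring] at this
    rw [Int.fract_add_of_one_le_fract_add inv_goldenRatio_lt_one hle] at hpos
    linarith
  have hshift : (((blockStart (rotationCoding φ⁻¹) k + 1 : ℕ) : ℝ) + 2) * φ⁻¹
      = (k + 1 : ℕ) + φ⁻¹ * (2 - f) := by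
    have hstart := blockStart_add_two_mul_inv_goldenRatio k
    push_cast at hstart ⊢
    linear_combination hstart
  rw [rotationCoding, decide_eq_true_iff, hshift, Int.fract_natCast_add,
    Int.fract_eq_self.mpr ⟨by nlinarith [inv_goldenRatio_pos],
      by nlinarith [inv_goldenRatio_sq, inv_goldenRatio_pos]⟩]
  nlinarith [inv_goldenRatio_pos]

theorem Hseq_rotationCoding_inv_goldenRatio :
    Hseq (rotationCoding φ⁻¹) = rotationCoding φ⁻¹ :=
  Hseq_eq_self_of_blocks _ rotationCoding_blockStart fun _ => rotationCoding_blockStart_add_one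

end GoldenRatio

/-- the itinerary of the point `2/γ (mod 1)` under the rotation by `γ`
with coding `0` on `[0, 1/γ)` and `1` on `[1/γ, 1)` is the fixed point `ρ` of the
Fibonacci substitution. -/
theorem itinerary_is_rho (γ : ℝ) (hγ : γ = (1 + Real.sqrt 5) / 2)
    (ρ : ℕ → Bool) (hρ : Hseq ρ = ρ) (n : ℕ) :
    ρ n = false ↔ Int.fract (2 * γ⁻¹ + n * γ) < γ⁻¹ := by
  obtain rfl : γ = Real.goldenRatio := hγ
  have hpoint :
      2 * Real.goldenRatio⁻¹ + n * Real.goldenRatio = n + (n + 2) * Real.goldenRatio⁻¹ := by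
    linear_combination (n : ℝ) * Real.goldenRatio_sub_inv
  rw [hpoint, Int.fract_natCast_add, Hseq_fixedPoint_unique hρ Hseq_rotationCoding_inv_goldenRatio,
    rotationCoding_eq_false_iff]
end

section
/- Define Ṽ on {0,1}^ℕ ∖ 𝕂 by Ṽ(x) = log((κ̃_0(x) + κ̃_1(x)/γ + γ)/(κ̃_0(x) + κ̃_1(x)/γ + γ − 1)) if x starts with 0, and Ṽ(x) = log((γκ̃_0(x) + κ̃_1(x) + γ²)/(γκ̃_0(x) + κ̃_1(x) + γ² − 1)) if x starts with 1, where κ̃_a(x) counts the symbols a in the maximal prefix of x common with 𝕂. Suppose x starts with 0, so H(x) starts with 01, and that κ̃_0(H(x)) = κ̃_0(x)+κ̃_1(x)+1, κ̃_1(H(x)) = κ̃_0(x), κ̃_0(σH(x)) = κ̃_0(x)+κ̃_1(x), κ̃_1(σH(x)) = κ̃_0(x). Then Ṽ(H(x)) + Ṽ(σ(H(x))) = Ṽ(x). -/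
open Real

lemma log_mul_div_add_log_mul_div {g a c : ℝ} (hg : g ≠ 0) (ha : a ≠ 0) (hc : c ≠ 0)
    (hc1 : c - 1 ≠ 0) :
    log (g * c / a) + log (g * a / (g ^ 2 * (c - 1))) = log (c / (c - 1)) := by
  rw [← log_mul (by positivity) (by positivity)]
  congr 1
  field_simp

theorem log_fixedpoint_identity {γ : ℝ} (hγ : γ ^ 2 = γ + 1) (hγ1 : 1 < γ) {n m : ℝ}
    (hn : 0 ≤ n) (hm : 0 ≤ m) :
    log ((n + m + 1 + n / γ + γ) / (n + m + 1 + n / γ + γ - 1)) +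
      log ((γ * (n + m) + n + γ ^ 2) / (γ * (n + m) + n + γ ^ 2 - 1)) =
      log ((n + m / γ + γ) / (n + m / γ + γ - 1)) := by
  have hγ0 : γ ≠ 0 := by positivity
  have hc1 : 1 < n + m / γ + γ := by
    have : 0 ≤ m / γ := by positivity
    linarith
  have first_num : n + m + 1 + n / γ + γ = γ * (n + m / γ + γ) := by
    field_simp
    linear_combination (-(n + γ)) * hγ
  have second_num : γ * (n + m) + n + γ ^ 2 = γ * (n + m + 1 + n / γ + γ - 1) := by
    field_simp
    ring
  have second_den : γ * (n + m) + n + γ ^ 2 - 1 = γ ^ 2 * (n + m / γ + γ - 1) := by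
    field_simp
    linear_combination (1 - γ - n) * hγ
  rw [second_den, second_num, first_num]
  exact log_mul_div_add_log_mul_div hγ0 (sub_ne_zero.mpr (one_lt_mul hγ1.le hc1).ne')
    (by positivity) (sub_ne_zero.mpr hc1.ne')

/-- the fixed-point identity `Ṽ(H(x)) + Ṽ(σ(H(x))) = Ṽ(x)` on the cylinder
`[0]`, as a real-number identity with `n = κ̃₀(x)`, `m = κ̃₁(x)`. -/
theorem fixedpoint_identity_cyl0 (γ : ℝ) (hγ : γ = (1 + Real.sqrt 5) / 2)
    (n m : ℝ) (hn : 0 ≤ n) (hm : 0 ≤ m) :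
    Real.log ((n + m + 1 + n / γ + γ) / (n + m + 1 + n / γ + γ - 1)) +
      Real.log ((γ * (n + m) + n + γ ^ 2) / (γ * (n + m) + n + γ ^ 2 - 1)) =
      Real.log ((n + m / γ + γ) / (n + m / γ + γ - 1)) := by
  obtain rfl : γ = goldenRatio := hγ
  exact log_fixedpoint_identity goldenRatio_sq one_lt_goldenRatio hn hm
end

section
/- For all nonnegative reals n, m and γ = (1+√5)/2: log((γ(n+m+1) + n + γ²)/(γ(n+m+1) + n + γ² − γ)) = log((γn + m + γ²)/(γn + m + γ² − 1)). (This is the fixed-point identity ℛṼ = Ṽ on the cylinder [1].) -/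
/-- Since `γ² = γ + 1`, numerator and denominator on the left are `γ` times those on the right. -/
theorem div_eq_div_of_sq_eq_add_one {K : Type*} [Field K] {γ : K} (hγ : γ ^ 2 = γ + 1) (n m : K) :
    (γ * (n + m + 1) + n + γ ^ 2) / (γ * (n + m + 1) + n + γ ^ 2 - γ) =
      (γ * n + m + γ ^ 2) / (γ * n + m + γ ^ 2 - 1) := by
  have hγ0 : γ ≠ 0 := by
    rintro rfl
    simp at hγ
  have hnum : γ * (n + m + 1) + n + γ ^ 2 = γ * (γ * n + m + γ ^ 2) := by
    linear_combination (-n - γ) * hγ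
  have hden : γ * (n + m + 1) + n + γ ^ 2 - γ = γ * (γ * n + m + γ ^ 2 - 1) := by
    linear_combination (-n - γ) * hγ
  rw [hden, hnum, mul_div_mul_left _ _ hγ0]

theorem fixedpoint_identity_cyl1_general (γ : ℝ) (hγ : γ = (1 + Real.sqrt 5) / 2)
    (n m : ℝ) :
    Real.log ((γ * (n + m + 1) + n + γ ^ 2) / (γ * (n + m + 1) + n + γ ^ 2 - γ)) =
      Real.log ((γ * n + m + γ ^ 2) / (γ * n + m + γ ^ 2 - 1)) := by
  subst hγ
  rw [div_eq_div_of_sq_eq_add_one Real.goldenRatio_sq]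

/-- the fixed-point identity `ℛṼ = Ṽ` on the cylinder `[1]`. -/
theorem fixedpoint_identity_cyl1 (γ : ℝ) (hγ : γ = (1 + Real.sqrt 5) / 2)
    (n m : ℝ) (hn : 0 ≤ n) (hm : 0 ≤ m) :
    Real.log ((γ * (n + m + 1) + n + γ ^ 2) / (γ * (n + m + 1) + n + γ ^ 2 - γ)) =
      Real.log ((γ * n + m + γ ^ 2) / (γ * n + m + γ ^ 2 - 1)) :=
  fixedpoint_identity_cyl1_general γ hγ n m
end

section
/- Let 0 < ζ < 1, ξ ≤ 1 arbitrary positive real with ξ ≤ 1, and K = 1/(1−ζ). Define the (n+1)×n matrix D_n by (D_n)_{i,j} = ((j−1)!/(i−1)!)·ζ^{j−i+1} if i ≤ j, (D_n)_{i,j} = ξ/j if i = j+1, and 0 if i > j+1, for 1 ≤ i ≤ n+1, 1 ≤ j ≤ n. Then, entrywise, D_n applied to the vector (K^{n−1}/0!, K^{n−1}/1!, …, K^{n−1}/(n−1)!)ᵀ is ≤ the vector (K^n/0!, K^n/1!, …, K^n/n!)ᵀ, provided ξ ≤ 1. -/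
open Finset Nat

noncomputable def dEntry (ζ ξ : ℝ) (i j : ℕ) : ℝ :=
  if i ≤ j then (j ! : ℝ) / i ! * ζ ^ (j - i + 1)
  else if i = j + 1 then ξ / (j + 1)
  else 0

lemma dEntry_mul_div_factorial (ζ ξ c : ℝ) (i j : ℕ) :
    dEntry ζ ξ i j * (c / j !) =
      c / i ! * ((if i ≤ j then ζ ^ (j - i + 1) else 0) + if i = j + 1 then ξ else 0) := by
  unfold dEntry
  split_ifs with hle hsucc hsucc
  · omega
  · field_simp
    ring
  · subst hsucc
    rw [factorial_succ]
    push_cast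
    field_simp
    ring
  · simp

lemma sum_range_pow_succ_le {ζ : ℝ} (hζ0 : 0 ≤ ζ) (hζ1 : ζ < 1) (m : ℕ) :
    ∑ d ∈ range m, ζ ^ (d + 1) ≤ ζ / (1 - ζ) := by
  have hgeom : ∑ d ∈ range m, ζ ^ d ≤ 1 / (1 - ζ) := by
    rw [range_eq_Ico]
    simpa using geom_sum_Ico_le_of_lt_one (m := 0) (n := m) hζ0 hζ1
  calc ∑ d ∈ range m, ζ ^ (d + 1) = ζ * ∑ d ∈ range m, ζ ^ d := by
        rw [mul_sum]
        exact sum_congr rfl fun d _ => pow_succ' ζ d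
    _ ≤ ζ * (1 / (1 - ζ)) := mul_le_mul_of_nonneg_left hgeom hζ0
    _ = ζ / (1 - ζ) := mul_one_div ζ (1 - ζ)

lemma sum_range_ite_le_pow_le {ζ : ℝ} (hζ0 : 0 ≤ ζ) (hζ1 : ζ < 1) (n i : ℕ) :
    ∑ k ∈ range n, (if i ≤ k then ζ ^ (k - i + 1) else 0) ≤ ζ / (1 - ζ) := by
  rw [sum_ite, sum_const_zero, add_zero, range_eq_Ico, Ico_filter_le_of_left_le (Nat.zero_le i),
    sum_Ico_eq_sum_range]
  simpa only [Nat.add_sub_cancel_left] using sum_range_pow_succ_le hζ0 hζ1 (n - i)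

lemma sum_range_ite_eq_succ_le {ξ : ℝ} (hξ : ξ ≤ 1) (n i : ℕ) :
    ∑ k ∈ range n, (if i = k + 1 then ξ else 0) ≤ 1 := by
  cases i with
  | zero => simp
  | succ m =>
    simp only [Nat.add_right_cancel_iff, sum_ite_eq, mem_range]
    split_ifs <;> linarith

lemma sum_dEntry_mul_div_factorial_le {ζ ξ c : ℝ} (hζ0 : 0 ≤ ζ) (hζ1 : ζ < 1) (hξ : ξ ≤ 1)
    (hc : 0 ≤ c) (n i : ℕ) :
    ∑ k ∈ range n, dEntry ζ ξ i k * (c / k !) ≤ c / i ! * (1 / (1 - ζ)) := by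
  simp only [dEntry_mul_div_factorial, ← mul_sum, sum_add_distrib]
  have hK : ζ / (1 - ζ) + 1 = 1 / (1 - ζ) := by
    field_simp [(sub_pos.2 hζ1).ne']
    ring
  gcongr
  linarith [sum_range_ite_le_pow_le hζ0 hζ1 n i, sum_range_ite_eq_succ_le hξ n i]

/-- Indices are 0-based: row `i`, column `j` correspond to the paper's `i+1`, `j+1`. -/
theorem matrix_vector_bound_general (n : ℕ) (ζ ξ : ℝ) (hζ0 : 0 < ζ) (hζ1 : ζ < 1)
    (hξ1 : ξ ≤ 1) (K : ℝ) (hK : K = 1 / (1 - ζ)) :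
    let D : Matrix (Fin (n + 1)) (Fin n) ℝ := fun i j =>
      if (i : ℕ) ≤ (j : ℕ) then
        ((j : ℕ).factorial : ℝ) / ((i : ℕ).factorial) * ζ ^ ((j : ℕ) - (i : ℕ) + 1)
      else if (i : ℕ) = (j : ℕ) + 1 then ξ / ((j : ℕ) + 1)
      else 0
    ∀ i : Fin (n + 1),
      D.mulVec (fun j : Fin n => K ^ (n - 1) / ((j : ℕ).factorial : ℝ)) i
        ≤ K ^ n / ((i : ℕ).factorial : ℝ) := by
  intro D i
  have hK0 : 0 < K := hK ▸ one_div_pos.2 (sub_pos.2 hζ1)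
  have hrow : D.mulVec (fun j : Fin n => K ^ (n - 1) / ((j : ℕ).factorial : ℝ)) i =
      ∑ k ∈ range n, dEntry ζ ξ i k * (K ^ (n - 1) / k !) :=
    Fin.sum_univ_eq_sum_range (fun k => dEntry ζ ξ i k * (K ^ (n - 1) / k !)) n
  rw [hrow]
  cases n with
  | zero => simp only [range_zero, sum_empty]; positivity
  | succ m =>
    calc _ ≤ K ^ m / i.val ! * K := hK ▸ sum_dEntry_mul_div_factorial_le hζ0.le hζ1 hξ1
            (pow_nonneg hK0.le m) (m + 1) i
      _ = K ^ (m + 1) / i.val ! := by rw [div_mul_eq_mul_div, pow_succ]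

/-- the matrix `D_n` maps the vector `(K^{n-1}/j!)_j` entrywise below
the vector `(K^n/i!)_i`, where `K = 1/(1-ζ)`, `0 < ζ < 1`, `0 < ξ ≤ 1`.
(Indices are 0-based: row `i`, column `j` correspond to the paper's `i+1`, `j+1`.) -/
theorem matrix_vector_bound (n : ℕ) (ζ ξ : ℝ) (hζ0 : 0 < ζ) (hζ1 : ζ < 1)
    (hξ0 : 0 < ξ) (hξ1 : ξ ≤ 1) (K : ℝ) (hK : K = 1 / (1 - ζ)) :
    let D : Matrix (Fin (n + 1)) (Fin n) ℝ := fun i j =>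
      if (i : ℕ) ≤ (j : ℕ) then
        ((j : ℕ).factorial : ℝ) / ((i : ℕ).factorial) * ζ ^ ((j : ℕ) - (i : ℕ) + 1)
      else if (i : ℕ) = (j : ℕ) + 1 then ξ / ((j : ℕ) + 1)
      else 0
    ∀ i : Fin (n + 1),
      D.mulVec (fun j : Fin n => K ^ (n - 1) / ((j : ℕ).factorial : ℝ)) i
        ≤ K ^ n / ((i : ℕ).factorial : ℝ) :=
  matrix_vector_bound_general n ζ ξ hζ0 hζ1 hξ1 K hK
end
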